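/- arXiv:1712.09379 — 2 statements merged into one kernel-verified Lean document; each statement's English description precedes it below -/
import Mathlib

section
/- Let ξ ∈ (0,1), τ ∈ ℝ, and let λ be either root of λ² − ξ|1+τ|·λ − ξ|τ| = 0, i.e. λ = (ξ|1+τ| ± √(ξ²(1+τ)² + 4ξ|τ|))/2. Then |λ| ≤ φ·ξ^{1/2}·(1 + |τ|), where φ = (1+√5)/2 is the golden ratio. -/
/-! Both roots have modulus at most `(ξ|1+τ| + √D)/2`, where `D = ξ²(1+τ)² + 4ξ|τ|`.
For `ξ ≤ 1` we have `ξ ≤ √ξ` and `ξ² ≤ ξ`, so `ξ|1+τ| ≤ √ξ (1+|τ|)` and `D ≤ 5ξ(1+|τ|)²`;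
averaging the two bounds gives the factor `(1 + √5)/2`. -/

theorem abs_half_add_mul_le {a b s : ℝ} (ha : 0 ≤ a) (hb : 0 ≤ b) (hs : |s| ≤ 1) :
    |(a + s * b) / 2| ≤ (a + b) / 2 := by
  have hsb : |s * b| ≤ b := by
    rw [abs_mul, abs_of_nonneg hb]
    exact mul_le_of_le_one_left hb hs
  rw [abs_div, abs_two]
  gcongr
  calc |a + s * b| ≤ |a| + |s * b| := abs_add_le a (s * b)
    _ ≤ a + b := by rw [abs_of_nonneg ha]; gcongr

theorem mul_abs_one_add_le_sqrt_mul {ξ : ℝ} (hξ : 0 ≤ ξ) (hξ1 : ξ ≤ 1) (τ : ℝ) :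
    ξ * |1 + τ| ≤ Real.sqrt ξ * (1 + |τ|) := by
  have hξ_le_sqrt : ξ ≤ Real.sqrt ξ :=
    Real.le_sqrt_of_sq_le (pow_le_of_le_one hξ hξ1 two_ne_zero)
  calc ξ * |1 + τ| ≤ ξ * (1 + |τ|) := by
        gcongr
        simpa using abs_add_le 1 τ
    _ ≤ Real.sqrt ξ * (1 + |τ|) := by gcongr

theorem sqrt_discriminant_le {ξ : ℝ} (hξ : 0 ≤ ξ) (hξ1 : ξ ≤ 1) (τ : ℝ) :
    Real.sqrt (ξ ^ 2 * (1 + τ) ^ 2 + 4 * ξ * |τ|) ≤ Real.sqrt 5 * Real.sqrt ξ * (1 + |τ|) := by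
  have hsq : (1 + τ) ^ 2 ≤ (1 + |τ|) ^ 2 := by
    rw [← sq_abs]
    gcongr
    simpa using abs_add_le 1 τ
  have hD : ξ ^ 2 * (1 + τ) ^ 2 + 4 * ξ * |τ| ≤ 5 * ξ * (1 + |τ|) ^ 2 := by
    have hξsq : ξ ^ 2 ≤ ξ := pow_le_of_le_one hξ hξ1 two_ne_zero
    have hτ : |τ| ≤ (1 + |τ|) ^ 2 := by nlinarith [abs_nonneg τ]
    calc ξ ^ 2 * (1 + τ) ^ 2 + 4 * ξ * |τ|
        ≤ ξ * (1 + |τ|) ^ 2 + 4 * ξ * (1 + |τ|) ^ 2 := by gcongr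
      _ = 5 * ξ * (1 + |τ|) ^ 2 := by ring
  calc Real.sqrt (ξ ^ 2 * (1 + τ) ^ 2 + 4 * ξ * |τ|) ≤ Real.sqrt (5 * ξ * (1 + |τ|) ^ 2) :=
        Real.sqrt_le_sqrt hD
    _ = Real.sqrt 5 * Real.sqrt ξ * (1 + |τ|) := by
        rw [Real.sqrt_mul (by positivity), Real.sqrt_mul (by norm_num),
          Real.sqrt_sq (by positivity)]

theorem stmt_6 (ξ τ lam s : ℝ) (hξ : 0 < ξ) (hξ1 : ξ < 1)
    (hs : s = -1 ∨ s = 1)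
    (hlam : lam = (ξ * |1 + τ| + s * Real.sqrt (ξ ^ 2 * (1 + τ) ^ 2 + 4 * ξ * |τ|)) / 2) :
    |lam| ≤ ((1 + Real.sqrt 5) / 2) * Real.sqrt ξ * (1 + |τ|) := by
  have hs_abs : |s| ≤ 1 := by rcases hs with rfl | rfl <;> norm_num
  calc |lam| ≤ (ξ * |1 + τ| + Real.sqrt (ξ ^ 2 * (1 + τ) ^ 2 + 4 * ξ * |τ|)) / 2 := by
        rw [hlam]
        exact abs_half_add_mul_le (by positivity) (Real.sqrt_nonneg _) hs_abs
    _ ≤ (Real.sqrt ξ * (1 + |τ|) + Real.sqrt 5 * Real.sqrt ξ * (1 + |τ|)) / 2 := by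
        gcongr (?_ + ?_) / 2
        · exact mul_abs_one_add_le_sqrt_mul hξ.le hξ1.le τ
        · exact sqrt_discriminant_le hξ.le hξ1.le τ
    _ = ((1 + Real.sqrt 5) / 2) * Real.sqrt ξ * (1 + |τ|) := by ring
end

section
/- Let ξ ∈ (0,1) and τ ∈ ℝ satisfy |τ| < (1 − φ·ξ^{1/2})/(φ·ξ^{1/2}) with φ = (1+√5)/2 and φ·ξ^{1/2} < 1. Then both eigenvalues λ₁,₂ = (ξ|1+τ| ± √(ξ²(1+τ)² + 4ξ|τ|))/2 of A = [[ξ|1+τ|, ξ|τ|], [1, 0]] satisfy |λ₁,₂| < 1. -/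
/-! The matrix `A` has characteristic polynomial `X² - aX - b` with `a = ξ|1+τ|` and `b = ξ|τ|`,
both nonnegative; its roots lie in the open unit disc as soon as `a + b < 1`, since then
`√(a² + 4b) < 2 - a`. The hypothesis on `τ` says `φ √ξ (1 + |τ|) < 1`, and since `φ ≥ 1` this gives
`ξ (1 + 2|τ|) ≤ ξ (1 + |τ|)² < 1`, which dominates `a + b`. -/

open Real

theorem abs_quadratic_roots_lt_one {a b : ℝ} (ha : 0 ≤ a) (hb : 0 ≤ b) (hab : a + b < 1) :
    |(a + √(a ^ 2 + 4 * b)) / 2| < 1 ∧ |(a - √(a ^ 2 + 4 * b)) / 2| < 1 := by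
  have hlt : √(a ^ 2 + 4 * b) < 2 - a := by
    rw [sqrt_lt' (by linarith)]
    nlinarith
  have hnonneg := sqrt_nonneg (a ^ 2 + 4 * b)
  constructor <;> rw [abs_lt] <;> constructor <;> linarith

theorem mul_one_add_two_mul_lt_one {ξ t : ℝ} (hξ : 0 ≤ ξ) (ht : 0 ≤ t) (h : √ξ * (1 + t) < 1) :
    ξ * (1 + 2 * t) < 1 :=
  calc ξ * (1 + 2 * t) ≤ (√ξ * (1 + t)) ^ 2 := by
        rw [mul_pow, sq_sqrt hξ]
        nlinarith [sq_nonneg t]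
    _ < 1 := pow_lt_one₀ (by positivity) h two_ne_zero

theorem stmt_7_general (ξ τ : ℝ) (hξ : 0 < ξ)
    (hτ : |τ| < (1 - ((1 + Real.sqrt 5) / 2) * Real.sqrt ξ) / (((1 + Real.sqrt 5) / 2) * Real.sqrt ξ)) :
    |(ξ * |1 + τ| + Real.sqrt (ξ ^ 2 * (1 + τ) ^ 2 + 4 * ξ * |τ|)) / 2| < 1 ∧
    |(ξ * |1 + τ| - Real.sqrt (ξ ^ 2 * (1 + τ) ^ 2 + 4 * ξ * |τ|)) / 2| < 1 := by
  have hφ : 1 ≤ (1 + √5) / 2 := one_lt_goldenRatio.le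
  have hsmall : √ξ * (1 + |τ|) < 1 := by
    have := (lt_div_iff₀ (by positivity)).mp hτ
    nlinarith [mul_nonneg (sqrt_nonneg ξ) (abs_nonneg τ), sqrt_nonneg ξ]
  have hsum : ξ * |1 + τ| + ξ * |τ| < 1 := by
    have := mul_one_add_two_mul_lt_one hξ.le (abs_nonneg τ) hsmall
    have := mul_le_mul_of_nonneg_left ((abs_add_le 1 τ).trans_eq (by rw [abs_one])) hξ.le
    linarith
  have hdisc : ξ ^ 2 * (1 + τ) ^ 2 + 4 * ξ * |τ| = (ξ * |1 + τ|) ^ 2 + 4 * (ξ * |τ|) := by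
    rw [mul_pow, sq_abs]
    ring
  rw [hdisc]
  exact abs_quadratic_roots_lt_one (by positivity) (by positivity) hsum

theorem stmt_7 (ξ τ : ℝ) (hξ : 0 < ξ) (hξ1 : ξ < 1)
    (hφξ : ((1 + Real.sqrt 5) / 2) * Real.sqrt ξ < 1)
    (hτ : |τ| < (1 - ((1 + Real.sqrt 5) / 2) * Real.sqrt ξ) / (((1 + Real.sqrt 5) / 2) * Real.sqrt ξ)) :
    |(ξ * |1 + τ| + Real.sqrt (ξ ^ 2 * (1 + τ) ^ 2 + 4 * ξ * |τ|)) / 2| < 1 ∧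
    |(ξ * |1 + τ| - Real.sqrt (ξ ^ 2 * (1 + τ) ^ 2 + 4 * ξ * |τ|)) / 2| < 1 :=
  stmt_7_general ξ τ hξ hτ
end
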